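/- arXiv:2312.07099 — 5 statements merged into one kernel-verified Lean document; each statement's English description precedes it below -/
import Mathlib

section
/- Let d ≥ 1, let ξ ∈ ℝ^d with ξ ≠ 0 and let k ∈ ℝ. Then the characteristic polynomial of the matrix A(ξ,k) equals (X − 1)^{d−1} · (X² − X + k·|ξ|²). In particular, the eigenvalues of A(ξ,k) are 1 (with algebraic multiplicity d − 1 when d ≥ 2) together with the two complex roots of X² − X + k·|ξ|². -/
open Matrix Polynomial

/-- The Fourier symbol `A(ξ,k)` of the linearized system
`∂ₜa + div u = 0`, `∂ₜu + u + ∇Kₑ∗a = 0` at frequency `ξ`, with `k = K̂ₑ(ξ)`.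
Rows/columns are indexed by `Fin (d+1)`: index `0` corresponds to the density mode,
indices `1,…,d` to the velocity components. -/
noncomputable def eulerSymbol (d : ℕ) (ξ : Fin d → ℝ) (k : ℝ) :
    Matrix (Fin (d + 1)) (Fin (d + 1)) ℂ :=
  Matrix.of fun i j =>
    Fin.cases
      (Fin.cases (0 : ℂ) (fun j' => Complex.I * (ξ j' : ℂ)) j)
      (fun i' =>
        Fin.cases (Complex.I * (k : ℂ) * (ξ i' : ℂ))
          (fun j' => if i' = j' then (1 : ℂ) else 0) j)
      i

/-!
Reordered so that the density mode comes first, `X • 1 - A(ξ,k)` is the arrow matrix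
`[[X, -iξᵀ], [-ikξ, (X - 1) • 1]]`. Multiplying it on the right by `[[X - 1, 0], [ikξ, 1]]`
makes it block upper triangular with diagonal blocks `X (X - 1) - (iξ)·(ikξ) = X² - X + k|ξ|²`
and `(X - 1) • 1`, so its determinant times `X - 1` is `(X - 1)^d (X² - X + k|ξ|²)`;
cancel `X - 1` in the domain `ℂ[X]`.
-/

theorem det_fromBlocks_replicateRow_replicateCol_smul_one_mul {R n : Type*} [CommRing R]
    [Fintype n] [DecidableEq n] (x y : R) (b c : n → R) :
    (fromBlocks (of fun _ _ => x : Matrix Unit Unit R) (replicateRow Unit b)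
      (replicateCol Unit c) (y • 1)).det * y = y ^ Fintype.card n * (x * y - b ⬝ᵥ c) := by
  have hMN : fromBlocks (of fun _ _ => x : Matrix Unit Unit R) (replicateRow Unit b)
      (replicateCol Unit c) (y • 1) * fromBlocks (of fun _ _ => y) 0 (-replicateCol Unit c) 1 =
      fromBlocks (of fun _ _ => x * y - b ⬝ᵥ c) (replicateRow Unit b) 0 (y • 1) := by
    simp only [fromBlocks_multiply]
    congr 1
    · ext; simp [dotProduct, Matrix.mul_apply]; ring
    · simp
    · ext; simp [Matrix.mul_apply]; ring
    · simp
  have := congrArg det hMN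
  rw [det_mul, det_fromBlocks_zero₁₂, det_fromBlocks_zero₂₁] at this
  simpa [mul_comm] using this

theorem det_fromBlocks_replicateRow_replicateCol_smul_one {R n : Type*} [CommRing R] [IsDomain R]
    [Fintype n] [DecidableEq n] [Nonempty n] {y : R} (hy : y ≠ 0) (x : R) (b c : n → R) :
    (fromBlocks (of fun _ _ => x : Matrix Unit Unit R) (replicateRow Unit b)
      (replicateCol Unit c) (y • 1)).det = y ^ (Fintype.card n - 1) * (x * y - b ⬝ᵥ c) := by
  refine mul_right_cancel₀ hy ?_
  rw [det_fromBlocks_replicateRow_replicateCol_smul_one_mul, mul_right_comm, ← pow_succ,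
    Nat.sub_add_cancel Fintype.card_pos]

def finSuccSumEquiv (d : ℕ) : Unit ⊕ Fin d ≃ Fin (d + 1) where
  toFun := Sum.elim (fun _ => 0) Fin.succ
  invFun := Fin.cases (Sum.inl ()) Sum.inr
  left_inv := by rintro (_ | j) <;> simp
  right_inv := fun i => by cases i using Fin.cases <;> simp

@[simp] lemma finSuccSumEquiv_inl (d : ℕ) (u : Unit) : finSuccSumEquiv d (Sum.inl u) = 0 := rfl

@[simp] lemma finSuccSumEquiv_inr {d : ℕ} (j : Fin d) :
    finSuccSumEquiv d (Sum.inr j) = j.succ :=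
  rfl

lemma charmatrix_eulerSymbol_submatrix (d : ℕ) (ξ : Fin d → ℝ) (k : ℝ) :
    (charmatrix (eulerSymbol d ξ k)).submatrix (finSuccSumEquiv d) (finSuccSumEquiv d) =
      fromBlocks (of fun _ _ => X : Matrix Unit Unit ℂ[X])
        (replicateRow Unit fun j => -C (Complex.I * ξ j))
        (replicateCol Unit fun i => -C (Complex.I * k * ξ i)) ((X - 1 : ℂ[X]) • 1) := by
  ext (_ | i) (_ | j) : 1
  · simp [eulerSymbol]
  · simp [eulerSymbol, (Fin.succ_ne_zero j).symm]
  · simp [eulerSymbol, Fin.succ_ne_zero i]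
  · rcases eq_or_ne i j with rfl | hij
    · simp [eulerSymbol]
    · simp [eulerSymbol, hij]

theorem charpoly_eulerSymbol_general (d : ℕ) (hd : 1 ≤ d) (ξ : Fin d → ℝ) (k : ℝ) :
    (eulerSymbol d ξ k).charpoly =
      (X - 1) ^ (d - 1) *
        (X ^ 2 - X + C ((k * ∑ j, ξ j ^ 2 : ℝ) : ℂ)) := by
  have : Nonempty (Fin d) := ⟨⟨0, hd⟩⟩
  rw [charpoly, ← det_submatrix_equiv_self (finSuccSumEquiv d), charmatrix_eulerSymbol_submatrix,
    det_fromBlocks_replicateRow_replicateCol_smul_one (X_sub_C_ne_zero 1), Fintype.card_fin]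
  congr 1
  have hdot : (fun j => -C (Complex.I * ξ j)) ⬝ᵥ (fun i => -C (Complex.I * k * ξ i)) =
      -C ((k * ∑ j, ξ j ^ 2 : ℝ) : ℂ) := by
    simp only [dotProduct, neg_mul_neg, ← C_mul, ← map_sum, ← C_neg]
    congr 1
    push_cast
    rw [Finset.mul_sum, ← Finset.sum_neg_distrib]
    refine Finset.sum_congr rfl fun j _ => ?_
    linear_combination (k : ℂ) * (ξ j : ℂ) ^ 2 * Complex.I_mul_I
  rw [hdot]
  ring

/-- The characteristic polynomial of `A(ξ,k)` equals
`(X − 1)^(d−1) · (X² − X + k·|ξ|²)`. -/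
theorem charpoly_eulerSymbol (d : ℕ) (hd : 1 ≤ d) (ξ : Fin d → ℝ) (hξ : ξ ≠ 0) (k : ℝ) :
    (eulerSymbol d ξ k).charpoly =
      (X - 1) ^ (d - 1) *
        (X ^ 2 - X + C ((k * ∑ j, ξ j ^ 2 : ℝ) : ℂ)) :=
  charpoly_eulerSymbol_general d hd ξ k
end

section
/- Let d ≥ 1 and let K : ℝ^d → ℝ be smooth and compactly supported. Let a, b : ℝ×ℝ^d → ℝ and u, v : ℝ×ℝ^d → ℝ^d be smooth, and assume that a is compactly supported in the space variable, locally uniformly in time (for every compact interval I ⊂ ℝ there is a compact set containing the support of a(t,·) for all t ∈ I). Assume that for all (t,x): ∂_t a + v·∇a + (1+b)·div u = 0 and ∂_t u + u + (v·∇)u + ∇_x(K ⋆ a(t,·)) = 0, where ⋆ denotes convolution in the space variable. Define w(t,x) := u(t,x) + ∇_x(K ⋆ a(t,·))(x). Then for all (t,x): (i) ∂_t a − Δ_x(K ⋆ a(t,·)) + v·∇a = −div w − b·div u, and (ii) ∂_t w + w + (v·∇)w = [v, ∇K⋆]·∇a − ∇_x(K ⋆ div(w − ∇_x(K⋆a))(t,·))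 − ∇_x(K ⋆ (b·div u)(t,·)), where the commutator is defined by [v, ∇K⋆]·∇a := (v·∇)(∇_x(K⋆a)) − ∇_x(K ⋆ ((v·∇)a)(t,·)). -/
open MeasureTheory

/-- Convolution on `ℝ^d`: `(K ⋆ f)(x) = ∫ K(x−y) f(y) dy`. -/
noncomputable def sconv {d : ℕ} (K f : EuclideanSpace ℝ (Fin d) → ℝ)
    (x : EuclideanSpace ℝ (Fin d)) : ℝ :=
  ∫ y, K (x - y) * f y

/-- Divergence of a vector field on `ℝ^d`: `div V (x) = ∑ᵢ ∂ᵢ Vᵢ (x)`. -/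
noncomputable def spaceDiv {d : ℕ}
    (V : EuclideanSpace ℝ (Fin d) → EuclideanSpace ℝ (Fin d))
    (x : EuclideanSpace ℝ (Fin d)) : ℝ :=
  ∑ i, fderiv ℝ (fun y => V y i) x (EuclideanSpace.single i 1)

/-- Laplacian of a scalar function on `ℝ^d`: `Δf(x) = ∑ᵢ ∂ᵢ∂ᵢ f(x)`. -/
noncomputable def lap {d : ℕ} (f : EuclideanSpace ℝ (Fin d) → ℝ)
    (x : EuclideanSpace ℝ (Fin d)) : ℝ :=
  ∑ i, fderiv ℝ (fun y => fderiv ℝ f y (EuclideanSpace.single i 1)) x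
    (EuclideanSpace.single i 1)

/-- The damped mode `w := u + ∇(K ⋆ a)`. -/
noncomputable def dampedMode {d : ℕ} (K : EuclideanSpace ℝ (Fin d) → ℝ)
    (a : ℝ → EuclideanSpace ℝ (Fin d) → ℝ)
    (u : ℝ → EuclideanSpace ℝ (Fin d) → EuclideanSpace ℝ (Fin d))
    (t : ℝ) (x : EuclideanSpace ℝ (Fin d)) : EuclideanSpace ℝ (Fin d) :=
  u t x + gradient (sconv K (a t)) x


section AuxLemmas

open Convolution Metric
open scoped Convolution ContDiff

variable {d : ℕ} {K : EuclideanSpace ℝ (Fin d) → ℝ}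

lemma gradient_apply' (F : EuclideanSpace ℝ (Fin d) → ℝ)
    (x : EuclideanSpace ℝ (Fin d)) (i : Fin d) :
    gradient F x i = fderiv ℝ F x (EuclideanSpace.single i 1) := by
  have h : fderiv ℝ F x (EuclideanSpace.single i 1)
      = @inner ℝ _ _ (gradient F x) (EuclideanSpace.single i 1) := by
    rw [gradient, ← InnerProductSpace.toDual_apply_apply,
      (InnerProductSpace.toDual ℝ _).apply_symm_apply]
  rw [h, real_inner_comm, EuclideanSpace.inner_single_left]
  simp

lemma sconv_eq_conv (K f : EuclideanSpace ℝ (Fin d) → ℝ) :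
    sconv K f = (K ⋆[ContinuousLinearMap.mul ℝ ℝ, volume] f) := by
  funext x
  rw [convolution_def]
  simp_rw [ContinuousLinearMap.mul_apply']
  rw [← integral_sub_left_eq_self (fun t => K t * f (x - t)) volume x]
  simp [sconv, sub_sub_cancel]

lemma integrable_smul_shift {f : EuclideanSpace ℝ (Fin d) → ℝ}
    {V : Type*} [NormedAddCommGroup V] [NormedSpace ℝ V]
    {W : EuclideanSpace ℝ (Fin d) → V} (hW : Continuous W) (hWs : HasCompactSupport W)
    (hf : Continuous f) (x : EuclideanSpace ℝ (Fin d)) :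
    Integrable (fun y => f y • W (x - y)) := by
  have hc : Continuous (fun y => f y • W (x - y)) :=
    hf.smul (hW.comp (continuous_const.sub continuous_id))
  have hs : HasCompactSupport (fun y => W (x - y)) :=
    hWs.comp_homeomorph (Homeomorph.subLeft x)
  exact hc.integrable_of_hasCompactSupport hs.smul_left

variable (hK : ContDiff ℝ (⊤ : ℕ∞) K) (hKsupp : HasCompactSupport K)
include hK hKsupp

lemma sconv_smooth {f : EuclideanSpace ℝ (Fin d) → ℝ} (hf : Continuous f) :
    ContDiff ℝ ∞ (sconv K f) := by
  rw [sconv_eq_conv]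
  exact HasCompactSupport.contDiff_convolution_left (μ := volume)
    (ContinuousLinearMap.mul ℝ ℝ) hKsupp (hK.of_le (by simp)) hf.locallyIntegrable

omit hKsupp in
lemma gradK_cont : Continuous (gradient K) :=
  (InnerProductSpace.toDual ℝ (EuclideanSpace ℝ (Fin d))).symm.continuous.comp
    ((hK.fderiv_right (m := ∞) (by simp)).continuous)

omit hK in
lemma gradK_supp : HasCompactSupport (gradient K) :=
  HasCompactSupport.comp_left (g := (InnerProductSpace.toDual ℝ
    (EuclideanSpace ℝ (Fin d))).symm) (hKsupp.fderiv ℝ) (map_zero _)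

lemma hasFDerivAt_sconv {f : EuclideanSpace ℝ (Fin d) → ℝ} (hf : Continuous f)
    (x : EuclideanSpace ℝ (Fin d)) :
    HasFDerivAt (sconv K f)
      ((fderiv ℝ K ⋆[(ContinuousLinearMap.mul ℝ ℝ).precompL
        (EuclideanSpace ℝ (Fin d)), volume] f) x) x := by
  rw [sconv_eq_conv]
  exact hKsupp.hasFDerivAt_convolution_left (ContinuousLinearMap.mul ℝ ℝ)
    (hK.of_le (by simp)) hf.locallyIntegrable x

lemma gradient_sconv {f : EuclideanSpace ℝ (Fin d) → ℝ} (hf : Continuous f)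
    (x : EuclideanSpace ℝ (Fin d)) :
    gradient (sconv K f) x = ∫ y, f y • gradient K (x - y) := by
  have hfd := hasFDerivAt_sconv hK hKsupp hf x
  have h1 : gradient (sconv K f) x = (InnerProductSpace.toDual ℝ _).symm
      ((fderiv ℝ K ⋆[(ContinuousLinearMap.mul ℝ ℝ).precompL
        (EuclideanSpace ℝ (Fin d)), volume] f) x) := by
    rw [gradient, hfd.fderiv]
  rw [h1, convolution_def]
  have h2 : (fun t => ((ContinuousLinearMap.mul ℝ ℝ).precompL (EuclideanSpace ℝ (Fin d))
        (fderiv ℝ K t)) (f (x - t)))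
      = fun t => f (x - t) • fderiv ℝ K t := by
    funext t; ext h; simp [mul_comm]
  rw [h2]
  have hkey : (InnerProductSpace.toDual ℝ (EuclideanSpace ℝ (Fin d))).symm
        (∫ t, f (x - t) • fderiv ℝ K t)
      = ∫ t, (InnerProductSpace.toDual ℝ (EuclideanSpace ℝ (Fin d))).symm
        (f (x - t) • fderiv ℝ K t) := by
    simpa using ((InnerProductSpace.toDual ℝ
      (EuclideanSpace ℝ (Fin d))).symm.toContinuousLinearEquiv.integral_comp_comm
      (fun t => f (x - t) • fderiv ℝ K t)).symm
  rw [hkey]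
  have h3 : (fun t => (InnerProductSpace.toDual ℝ (EuclideanSpace ℝ (Fin d))).symm
        (f (x - t) • fderiv ℝ K t)) = fun t => f (x - t) • gradient K t := by
    funext t; simp [gradient]
  rw [h3, ← integral_sub_left_eq_self (fun t => f (x - t) • gradient K t) volume x]
  congr 1; funext y; rw [sub_sub_cancel]

lemma hasDerivAt_gradient_sconv {a : ℝ → EuclideanSpace ℝ (Fin d) → ℝ}
    (ha : ContDiff ℝ (⊤ : ℕ∞) (fun p : ℝ × EuclideanSpace ℝ (Fin d) => a p.1 p.2))
    (t : ℝ) (x : EuclideanSpace ℝ (Fin d)) :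
    HasDerivAt (fun s => gradient (sconv K (a s)) x)
      (gradient (sconv K (fun y => deriv (fun s => a s y) t)) x) t := by
  set A : ℝ × EuclideanSpace ℝ (Fin d) → ℝ := fun p => a p.1 p.2 with hAdef
  have hgradc : Continuous (gradient K) := gradK_cont hK
  have hgrads : HasCompactSupport (gradient K) := gradK_supp hKsupp
  have hAd : Differentiable ℝ A := ha.differentiable (by simp)
  have hderiv : ∀ s y, HasDerivAt (fun s' => a s' y) (fderiv ℝ A (s, y) (1, 0)) s := by
    intro s y
    have h2 : HasDerivAt (fun s' : ℝ => (s', y)) ((1:ℝ), (0 : EuclideanSpace ℝ (Fin d))) s :=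
      (hasDerivAt_id s).prodMk (hasDerivAt_const s y)
    exact (hAd (s, y)).hasFDerivAt.comp_hasDerivAt s h2
  have haC : ∀ s, Continuous (a s) := fun s => ha.continuous.comp (Continuous.prodMk_right s)
  have hA'c : Continuous (fun p : ℝ × EuclideanSpace ℝ (Fin d) => fderiv ℝ A p (1, 0)) :=
    ((ha.fderiv_right (m := ∞) (by simp)).continuous).clm_apply continuous_const
  have hScomp : IsCompact ((fun y => x - y) '' tsupport (gradient K)) :=
    hgrads.image (continuous_const.sub continuous_id)
  obtain ⟨C, hC⟩ := ((isCompact_closedBall t 1).prod hScomp).exists_bound_of_continuousOn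
    hA'c.continuousOn
  have key := hasDerivAt_integral_of_dominated_loc_of_deriv_le (μ := volume)
      (F := fun s y => a s y • gradient K (x - y))
      (F' := fun s y => fderiv ℝ A (s, y) (1, 0) • gradient K (x - y))
      (bound := fun y => C * ‖gradient K (x - y)‖) (Metric.ball_mem_nhds t zero_lt_one)
      (Filter.Eventually.of_forall fun s =>
        ((haC s).smul (hgradc.comp (continuous_const.sub continuous_id))).aestronglyMeasurable)
      (integrable_smul_shift hgradc hgrads (haC t) x)
      (((hA'c.comp (Continuous.prodMk_right t)).smul
        (hgradc.comp (continuous_const.sub continuous_id))).aestronglyMeasurable)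
      (Filter.Eventually.of_forall ?_) ?_ (Filter.Eventually.of_forall ?_)
  · have e1 : (fun s => ∫ y, a s y • gradient K (x - y))
        = fun s => gradient (sconv K (a s)) x :=
      funext fun s => (gradient_sconv hK hKsupp (haC s) x).symm
    have hd't : Continuous (fun y => deriv (fun s => a s y) t) := by
      have h : (fun y => deriv (fun s => a s y) t)
          = fun y => fderiv ℝ A (t, y) (1, 0) := funext fun y => (hderiv t y).deriv
      rw [h]; exact hA'c.comp (Continuous.prodMk_right t)
    have e2 : (∫ y, fderiv ℝ A (t, y) (1, 0) • gradient K (x - y))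
        = gradient (sconv K (fun y => deriv (fun s => a s y) t)) x := by
      rw [gradient_sconv hK hKsupp hd't x]
      congr 1; funext y; rw [(hderiv t y).deriv]
    rw [← e1, ← e2]
    exact key.2
  · intro y s hs
    rw [norm_smul]
    by_cases h0 : gradient K (x - y) = 0
    · simp [h0]
    · have hyS : y ∈ (fun y => x - y) '' tsupport (gradient K) :=
        ⟨x - y, subset_tsupport _ h0, sub_sub_cancel x y⟩
      exact mul_le_mul_of_nonneg_right
        (hC (s, y) ⟨ball_subset_closedBall hs, hyS⟩) (norm_nonneg _)
  · simpa [smul_eq_mul] using integrable_smul_shift (f := fun _ => C)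
      hgradc.norm hgrads.norm continuous_const x
  · intro y s _
    exact (hderiv s y).smul_const _

omit hK hKsupp in
lemma cont_deriv_slice {a : ℝ → EuclideanSpace ℝ (Fin d) → ℝ}
    (ha : ContDiff ℝ (⊤ : ℕ∞) (fun p : ℝ × EuclideanSpace ℝ (Fin d) => a p.1 p.2)) (t : ℝ) :
    Continuous (fun y => deriv (fun s => a s y) t) := by
  set A : ℝ × EuclideanSpace ℝ (Fin d) → ℝ := fun p => a p.1 p.2 with hAdef
  have hAd : Differentiable ℝ A := ha.differentiable (by simp)
  have hderiv : ∀ y, HasDerivAt (fun s' => a s' y) (fderiv ℝ A (t, y) (1, 0)) t := by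
    intro y
    have h2 : HasDerivAt (fun s' : ℝ => (s', y)) ((1:ℝ), (0 : EuclideanSpace ℝ (Fin d))) t :=
      (hasDerivAt_id t).prodMk (hasDerivAt_const t y)
    exact (hAd (t, y)).hasFDerivAt.comp_hasDerivAt t h2
  have h : (fun y => deriv (fun s => a s y) t)
      = fun y => fderiv ℝ A (t, y) (1, 0) := funext fun y => (hderiv y).deriv
  rw [h]
  exact (((ha.fderiv_right (m := ∞) (by simp)).continuous).clm_apply
    continuous_const).comp (Continuous.prodMk_right t)

end AuxLemmas

open scoped Convolution ContDiff

/-- Diagonalization of the linearized system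
`∂ₜa + v·∇a + (1+b)div u = 0`, `∂ₜu + u + (v·∇)u + ∇(K⋆a) = 0` into the (degenerate)
parabolic mode `a` and the damped mode `w = u + ∇(K⋆a)`:
(i) `∂ₜa − Δ(K⋆a) + v·∇a = −div w − b div u`;
(ii) `∂ₜw + w + (v·∇)w = [v,∇K⋆]·∇a − ∇(K ⋆ div(w − ∇(K⋆a))) − ∇(K ⋆ (b div u))`,
where `[v,∇K⋆]·∇a := (v·∇)(∇(K⋆a)) − ∇(K ⋆ ((v·∇)a))`. -/
theorem linearized_diagonalization
    (d : ℕ) (hd : 1 ≤ d)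
    (K : EuclideanSpace ℝ (Fin d) → ℝ) (hK : ContDiff ℝ (⊤ : ℕ∞) K)
    (hKsupp : HasCompactSupport K)
    (a b : ℝ → EuclideanSpace ℝ (Fin d) → ℝ)
    (u v : ℝ → EuclideanSpace ℝ (Fin d) → EuclideanSpace ℝ (Fin d))
    (ha : ContDiff ℝ (⊤ : ℕ∞) (fun p : ℝ × EuclideanSpace ℝ (Fin d) => a p.1 p.2))
    (hb : ContDiff ℝ (⊤ : ℕ∞) (fun p : ℝ × EuclideanSpace ℝ (Fin d) => b p.1 p.2))
    (hu : ContDiff ℝ (⊤ : ℕ∞) (fun p : ℝ × EuclideanSpace ℝ (Fin d) => u p.1 p.2))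
    (hv : ContDiff ℝ (⊤ : ℕ∞) (fun p : ℝ × EuclideanSpace ℝ (Fin d) => v p.1 p.2))
    (hasupp : ∀ I : Set ℝ, IsCompact I → ∃ S : Set (EuclideanSpace ℝ (Fin d)),
        IsCompact S ∧ ∀ t ∈ I, Function.support (a t) ⊆ S)
    (heq1 : ∀ t x, deriv (fun s => a s x) t + fderiv ℝ (a t) x (v t x)
        + (1 + b t x) * spaceDiv (u t) x = 0)
    (heq2 : ∀ t x, deriv (fun s => u s x) t + u t x + fderiv ℝ (u t) x (v t x)
        + gradient (sconv K (a t)) x = 0) :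
    (∀ t x, deriv (fun s => a s x) t - lap (sconv K (a t)) x
        + fderiv ℝ (a t) x (v t x)
      = -spaceDiv (dampedMode K a u t) x - b t x * spaceDiv (u t) x) ∧
    (∀ t x, deriv (fun s => dampedMode K a u s x) t + dampedMode K a u t x
        + fderiv ℝ (dampedMode K a u t) x (v t x)
      = (fderiv ℝ (fun y => gradient (sconv K (a t)) y) x (v t x)
          - gradient (sconv K (fun y => fderiv ℝ (a t) y (v t y))) x)
        - gradient (sconv K (fun y =>
            spaceDiv (fun z => dampedMode K a u t z - gradient (sconv K (a t)) z) y)) x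
        - gradient (sconv K (fun y => b t y * spaceDiv (u t) y)) x) := by
  classical
  have haC : ∀ t, Continuous (a t) := fun t => ha.continuous.comp (Continuous.prodMk_right t)
  have hbC : ∀ t, Continuous (b t) := fun t => hb.continuous.comp (Continuous.prodMk_right t)
  have hvC : ∀ t, Continuous (v t) := fun t => hv.continuous.comp (Continuous.prodMk_right t)
  have hat : ∀ t, ContDiff ℝ (⊤ : ℕ∞) (a t) := fun t => ha.comp (contDiff_const.prodMk contDiff_id)
  have hut : ∀ t, ContDiff ℝ (⊤ : ℕ∞) (u t) := fun t => hu.comp (contDiff_const.prodMk contDiff_id)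
  have hui : ∀ t (i : Fin d), ContDiff ℝ (⊤ : ℕ∞) (fun y => u t y i) := by
    intro t i
    have h : (fun y => u t y i)
        = (⇑(EuclideanSpace.proj (𝕜 := ℝ) i) ∘ u t) := by
      funext y; simp
    rw [h]
    exact (EuclideanSpace.proj i).contDiff.comp (hut t)
  have hdivuC : ∀ t, Continuous (fun y => spaceDiv (u t) y) := by
    intro t
    simp only [spaceDiv]
    exact continuous_finset_sum _ fun i _ =>
      (((hui t i).fderiv_right (m := ∞) (by simp)).continuous).clm_apply continuous_const
  have hg1C : ∀ t, Continuous (fun y => fderiv ℝ (a t) y (v t y)) := fun t =>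
    (((hat t).fderiv_right (m := ∞) (by simp)).continuous).clm_apply (hvC t)
  have hg3C : ∀ t, Continuous (fun y => b t y * spaceDiv (u t) y) := fun t =>
    (hbC t).mul (hdivuC t)
  have hF : ∀ t, ContDiff ℝ ∞ (sconv K (a t)) := fun t => sconv_smooth hK hKsupp (haC t)
  have hgradF : ∀ t, Differentiable ℝ (fun z => gradient (sconv K (a t)) z) := by
    intro t
    have h1 : Differentiable ℝ (fun z => fderiv ℝ (sconv K (a t)) z) :=
      ((hF t).fderiv_right (m := ∞) (by exact_mod_cast le_top)).differentiable
        (by simp)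
    exact ((InnerProductSpace.toDual ℝ
      (EuclideanSpace ℝ (Fin d))).symm.toContinuousLinearEquiv.differentiable).comp h1
  have hgradFiD : ∀ t (x : EuclideanSpace ℝ (Fin d)) (i : Fin d), DifferentiableAt ℝ
      (fun y => fderiv ℝ (sconv K (a t)) y (EuclideanSpace.single i 1)) x := fun t x i =>
    ((((hF t).fderiv_right (m := ∞) (by exact_mod_cast le_top)).clm_apply
      contDiff_const).differentiable (by simp)) x
  have hdivw : ∀ t x, spaceDiv (dampedMode K a u t) x
      = spaceDiv (u t) x + lap (sconv K (a t)) x := by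
    intro t x
    have hw : dampedMode K a u t = fun z => u t z + gradient (sconv K (a t)) z := rfl
    rw [hw]
    simp only [spaceDiv, lap, ← Finset.sum_add_distrib]
    refine Finset.sum_congr rfl fun i _ => ?_
    have hcomp : (fun y => (u t y + gradient (sconv K (a t)) y) i)
        = fun y => (fun z => u t z i) y
          + (fun z => fderiv ℝ (sconv K (a t)) z (EuclideanSpace.single i 1)) y := by
      funext y
      simp [gradient_apply']
    rw [hcomp, fderiv_fun_add (((hui t i).differentiable (by simp)) x) (hgradFiD t x i)]
    rfl
  refine ⟨?_, ?_⟩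
  · intro t x
    have h := heq1 t x
    rw [add_mul, one_mul] at h
    rw [hdivw t x]
    linarith
  · intro t x
    have hud : Differentiable ℝ (fun p : ℝ × EuclideanSpace ℝ (Fin d) => u p.1 p.2) :=
      hu.differentiable (by simp)
    have hu' : HasDerivAt (fun s => u s x)
        (fderiv ℝ (fun p : ℝ × EuclideanSpace ℝ (Fin d) => u p.1 p.2) (t, x) (1, 0)) t := by
      have h2 : HasDerivAt (fun s : ℝ => (s, x)) ((1:ℝ), (0 : EuclideanSpace ℝ (Fin d))) t :=
        (hasDerivAt_id t).prodMk (hasDerivAt_const t x)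
      exact (hud (t, x)).hasFDerivAt.comp_hasDerivAt t h2
    have hg' := hasDerivAt_gradient_sconv hK hKsupp ha t x
    have hw' : HasDerivAt (fun s => dampedMode K a u s x)
        (fderiv ℝ (fun p : ℝ × EuclideanSpace ℝ (Fin d) => u p.1 p.2) (t, x) (1, 0)
          + gradient (sconv K (fun y => deriv (fun s => a s y) t)) x) t := hu'.add hg'
    have hWx : dampedMode K a u t x = u t x + gradient (sconv K (a t)) x := rfl
    have hfd : fderiv ℝ (dampedMode K a u t) x
        = fderiv ℝ (u t) x + fderiv ℝ (fun y => gradient (sconv K (a t)) y) x := by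
      have hwt : dampedMode K a u t = fun z => u t z + gradient (sconv K (a t)) z := rfl
      rw [hwt]
      exact fderiv_fun_add (((hut t).differentiable (by simp)) x) ((hgradF t) x)
    have hDw : fderiv ℝ (dampedMode K a u t) x (v t x)
        = fderiv ℝ (u t) x (v t x)
          + fderiv ℝ (fun y => gradient (sconv K (a t)) y) x (v t x) := by
      rw [hfd]; rfl
    have h2 := heq2 t x
    rw [hu'.deriv] at h2
    have hsub : (fun z => dampedMode K a u t z - gradient (sconv K (a t)) z) = u t := by
      funext z; simp [dampedMode]
    have hat'eq : gradient (sconv K (fun y => deriv (fun s => a s y) t)) x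
        = -gradient (sconv K (fun y => fderiv ℝ (a t) y (v t y))) x
          - gradient (sconv K (fun y => spaceDiv (u t) y)) x
          - gradient (sconv K (fun y => b t y * spaceDiv (u t) y)) x := by
      have hd't : Continuous (fun y => deriv (fun s => a s y) t) := cont_deriv_slice ha t
      rw [gradient_sconv hK hKsupp hd't x, gradient_sconv hK hKsupp (hg1C t) x,
        gradient_sconv hK hKsupp (hdivuC t) x, gradient_sconv hK hKsupp (hg3C t) x]
      have hint1 := integrable_smul_shift (gradK_cont hK) (gradK_supp hKsupp) (hg1C t) x
      have hint2 := integrable_smul_shift (gradK_cont hK) (gradK_supp hKsupp) (hdivuC t) x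
      have hint3 := integrable_smul_shift (gradK_cont hK) (gradK_supp hKsupp) (hg3C t) x
      have hptw : (fun y => (deriv (fun s => a s y) t) • gradient K (x - y))
          = fun y => (-(fderiv ℝ (a t) y (v t y) • gradient K (x - y))
              - spaceDiv (u t) y • gradient K (x - y))
              - (b t y * spaceDiv (u t) y) • gradient K (x - y) := by
        funext y
        have h1 := heq1 t y
        rw [add_mul, one_mul] at h1
        have hval : deriv (fun s => a s y) t
            = -(fderiv ℝ (a t) y (v t y)) - spaceDiv (u t) y
              - b t y * spaceDiv (u t) y := by linarith
        rw [hval, sub_smul, sub_smul, neg_smul]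
      have hintn1 : Integrable (fun y => -(fderiv ℝ (a t) y (v t y) • gradient K (x - y)))
          volume := hint1.neg
      have hint12 : Integrable (fun y => -(fderiv ℝ (a t) y (v t y) • gradient K (x - y))
          - spaceDiv (u t) y • gradient K (x - y)) volume := hintn1.sub hint2
      rw [hptw, integral_sub hint12 hint3, integral_sub hintn1 hint2, integral_neg]
    rw [hw'.deriv, hWx, hDw]
    simp only [hsub]
    rw [hat'eq]
    have h2' : fderiv ℝ (fun p : ℝ × EuclideanSpace ℝ (Fin d) => u p.1 p.2) (t, x) (1, 0)
        + (u t x + fderiv ℝ (u t) x (v t x) + gradient (sconv K (a t)) x) = 0 := by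
      rw [← add_assoc, ← add_assoc]; exact h2
    have hU' := eq_neg_of_add_eq_zero_left h2'
    rw [hU']
    module
end

section
/- Let d ≥ 1. Let c : ℝ^d → ℝ be Lipschitz with Lipschitz constant M, let G : ℝ^d → ℝ be measurable with A := ∫_{ℝ^d} |z|·|G(z)| dz < ∞, and let h ∈ L²(ℝ^d). Then the function F(x) := ∫_{ℝ^d} G(x−y)·(c(x) − c(y))·h(y) dy is well defined for almost every x, belongs to L²(ℝ^d), and satisfies ‖F‖_{L²} ≤ M·A·‖h‖_{L²}. -/
/-!
Since `|c x - c y| ≤ M ‖x - y‖`, the commutator is dominated pointwise by the convolution of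
`K z = M ‖z‖ |G z|` with `|h|`. Young's inequality `‖K ⋆ f‖₂ ≤ ‖K‖₁ ‖f‖₂` then gives the bound;
it follows from the Cauchy–Schwarz inequality for the weight `K` and the translation invariance
of the measure.
-/

open MeasureTheory
open scoped ENNReal

theorem sq_lintegral_mul_le {α : Type*} [MeasurableSpace α] {μ : Measure α} {w f : α → ℝ≥0∞}
    (hw : AEMeasurable w μ) (hf : AEMeasurable f μ) :
    (∫⁻ a, w a * f a ∂μ) ^ 2 ≤ (∫⁻ a, w a ∂μ) * ∫⁻ a, w a * f a ^ 2 ∂μ := by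
  have sqrt_sq : ∀ x : ℝ≥0∞, (x ^ ((2 : ℕ) : ℝ)⁻¹) ^ 2 = x :=
    ENNReal.rpow_inv_natCast_pow two_ne_zero
  have geometric_mean :
      ∀ a, w a ^ ((2 : ℕ) : ℝ)⁻¹ * (w a * f a ^ 2) ^ ((2 : ℕ) : ℝ)⁻¹ = w a * f a := by
    intro a
    rw [ENNReal.mul_rpow_of_nonneg _ _ (by positivity), ENNReal.pow_rpow_inv_natCast two_ne_zero,
      ← mul_assoc, ← sq, sqrt_sq]
  have holder := ENNReal.lintegral_mul_norm_pow_le (g := fun a => w a * f a ^ 2) hw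
    (hw.mul (hf.pow_const 2)) (p := ((2 : ℕ) : ℝ)⁻¹) (q := ((2 : ℕ) : ℝ)⁻¹)
    (by positivity) (by positivity) (by norm_num)
  simp only [geometric_mean] at holder
  calc (∫⁻ a, w a * f a ∂μ) ^ 2
      ≤ ((∫⁻ a, w a ∂μ) ^ ((2 : ℕ) : ℝ)⁻¹ * (∫⁻ a, w a * f a ^ 2 ∂μ) ^ ((2 : ℕ) : ℝ)⁻¹) ^ 2 := by
        gcongr
    _ = (∫⁻ a, w a ∂μ) * ∫⁻ a, w a * f a ^ 2 ∂μ := by rw [mul_pow, sqrt_sq, sqrt_sq]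

theorem sq_eLpNorm_two {α ε : Type*} [MeasurableSpace α] [ENorm ε] {μ : Measure α}
    (f : α → ε) : eLpNorm f 2 μ ^ 2 = ∫⁻ x, ‖f x‖ₑ ^ 2 ∂μ := by
  simpa [ENNReal.rpow_two] using eLpNorm_nnreal_pow_eq_lintegral (μ := μ) (f := f) two_ne_zero

section Young

variable {G : Type*} [MeasurableSpace G] [AddGroup G] [MeasurableAdd₂ G] [MeasurableNeg G]
  {μ : Measure G} [μ.IsAddLeftInvariant] [SFinite μ] {K f : G → ℝ≥0∞}

theorem lintegral_lconvolution_sq_le (hK : AEMeasurable K μ) (hf : AEMeasurable f μ) :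
    ∫⁻ x, (K ⋆ₗ[μ] f) x ^ 2 ∂μ ≤ (∫⁻ y, K y ∂μ) ^ 2 * ∫⁻ x, f x ^ 2 ∂μ := by
  have h_joint : AEMeasurable (fun p : G × G => K p.2 * f (-p.2 + p.1) ^ 2) (μ.prod μ) := by
    fun_prop
  have h_translate : ∀ y, ∫⁻ x, K y * f (-y + x) ^ 2 ∂μ = K y * ∫⁻ x, f x ^ 2 ∂μ := fun y =>
    (lintegral_add_left_eq_self (fun x => K y * f x ^ 2) (-y)).trans
      (lintegral_const_mul'' _ (hf.pow_const 2))
  calc ∫⁻ x, (K ⋆ₗ[μ] f) x ^ 2 ∂μ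
      ≤ ∫⁻ x, (∫⁻ y, K y ∂μ) * ∫⁻ y, K y * f (-y + x) ^ 2 ∂μ ∂μ :=
        lintegral_mono fun x => sq_lintegral_mul_le hK (by fun_prop)
    _ = (∫⁻ y, K y ∂μ) * ∫⁻ y, ∫⁻ x, K y * f (-y + x) ^ 2 ∂μ ∂μ := by
        rw [lintegral_const_mul'' _ h_joint.lintegral_prod_right',
          lintegral_lintegral_swap h_joint]
    _ = (∫⁻ y, K y ∂μ) ^ 2 * ∫⁻ x, f x ^ 2 ∂μ := by
        simp_rw [h_translate]
        rw [lintegral_mul_const'' _ hK, sq, mul_assoc]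

theorem eLpNorm_two_lconvolution_le (hK : AEMeasurable K μ) (hf : AEMeasurable f μ) :
    eLpNorm (K ⋆ₗ[μ] f) 2 μ ≤ (∫⁻ y, K y ∂μ) * eLpNorm f 2 μ := by
  rw [← ENNReal.pow_le_pow_left_iff two_ne_zero, mul_pow, sq_eLpNorm_two,
    sq_eLpNorm_two]
  exact lintegral_lconvolution_sq_le hK hf

end Young

section Commutator

variable {E : Type*} [NormedAddCommGroup E] [MeasurableSpace E] {μ : Measure E}
  {c G h : E → ℝ}

theorem enorm_integral_commutator_le [MeasurableAdd₂ E] [MeasurableNeg E]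
    [μ.IsAddLeftInvariant] [μ.IsNegInvariant] {M : ℝ} (hc : ∀ x y, |c x - c y| ≤ M * ‖x - y‖)
    (x : E) :
    ‖∫ y, G (x - y) * (c x - c y) * h y ∂μ‖ₑ ≤
      ((fun z => ENNReal.ofReal (M * (‖z‖ * |G z|))) ⋆ₗ[μ] fun y => ‖h y‖ₑ) x := by
  rw [lconvolution_comm, lconvolution_def]
  refine (enorm_integral_le_lintegral_enorm _).trans (lintegral_mono fun y => ?_)
  rw [neg_add_eq_sub, Real.enorm_eq_ofReal_abs, Real.enorm_eq_ofReal_abs,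
    ← ENNReal.ofReal_mul (abs_nonneg _), abs_mul, abs_mul]
  apply ENNReal.ofReal_le_ofReal
  calc |G (x - y)| * |c x - c y| * |h y| ≤ |G (x - y)| * (M * ‖x - y‖) * |h y| := by
        gcongr; exact hc x y
    _ = |h y| * (M * (‖x - y‖ * |G (x - y)|)) := by ring

theorem aestronglyMeasurable_integral_commutator [MeasurableSub₂ E] [SFinite μ]
    (hc : Measurable c) (hG : Measurable G) (hh : AEStronglyMeasurable h μ) :
    AEStronglyMeasurable (fun x => ∫ y, G (x - y) * (c x - c y) * h y ∂μ) μ := by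
  have h_joint : AEStronglyMeasurable
      (fun p : E × E => G (p.1 - p.2) * (c p.1 - c p.2) * h p.2) (μ.prod μ) :=
    ((hG.comp (measurable_fst.sub measurable_snd)).aestronglyMeasurable.mul
      ((hc.comp measurable_fst).sub (hc.comp measurable_snd)).aestronglyMeasurable).mul
      hh.comp_snd
  exact h_joint.integral_prod_right'

end Commutator

theorem commutator_first_order_L2_general (d : ℕ)
    (c : EuclideanSpace ℝ (Fin d) → ℝ) (M : ℝ) (hM : 0 ≤ M)
    (hc : ∀ x y, |c x - c y| ≤ M * ‖x - y‖)
    (G : EuclideanSpace ℝ (Fin d) → ℝ) (hGm : Measurable G)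
    (hGA : Integrable (fun z => ‖z‖ * |G z|))
    (h : EuclideanSpace ℝ (Fin d) → ℝ) (hh : MemLp h 2 volume) :
    MemLp (fun x => ∫ y, G (x - y) * (c x - c y) * h y) 2 volume ∧
    eLpNorm (fun x => ∫ y, G (x - y) * (c x - c y) * h y) 2 volume
      ≤ ENNReal.ofReal (M * ∫ z, ‖z‖ * |G z|) * eLpNorm h 2 volume := by
  have hc_lipschitz : LipschitzWith ⟨M, hM⟩ c :=
    LipschitzWith.of_dist_le_mul fun x y => by rw [Real.dist_eq, dist_eq_norm]; exact hc x y
  have hK_integral : ∫⁻ z, ENNReal.ofReal (M * (‖z‖ * |G z|)) =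
      ENNReal.ofReal (M * ∫ z, ‖z‖ * |G z|) := by
    rw [← integral_const_mul, ofReal_integral_eq_lintegral_ofReal (hGA.const_mul M)
      (ae_of_all _ fun z => by positivity)]
  have hbound : eLpNorm (fun x => ∫ y, G (x - y) * (c x - c y) * h y) 2 volume
      ≤ ENNReal.ofReal (M * ∫ z, ‖z‖ * |G z|) * eLpNorm h 2 volume :=
    calc _ ≤ eLpNorm ((fun z => ENNReal.ofReal (M * (‖z‖ * |G z|))) ⋆ₗ fun y => ‖h y‖ₑ)
          2 volume := eLpNorm_mono_enorm (enorm_integral_commutator_le hc)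
      _ ≤ _ := eLpNorm_two_lconvolution_le (by fun_prop) hh.1.enorm
      _ = _ := by rw [hK_integral, eLpNorm_enorm]
  refine ⟨⟨aestronglyMeasurable_integral_commutator hc_lipschitz.continuous.measurable hGm hh.1,
    hbound.trans_lt (ENNReal.mul_lt_top ENNReal.ofReal_lt_top hh.2)⟩, hbound⟩

/-- First-order commutator estimate: if `c` is Lipschitz with constant `M`,
`A = ∫ |z|·|G(z)| dz < ∞` and `h ∈ L²`, then the commutator
`F(x) = ∫ G(x−y)(c(x)−c(y))h(y) dy` belongs to `L²` with `‖F‖_{L²} ≤ M·A·‖h‖_{L²}`. -/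
theorem commutator_first_order_L2 (d : ℕ) (hd : 1 ≤ d)
    (c : EuclideanSpace ℝ (Fin d) → ℝ) (M : ℝ) (hM : 0 ≤ M)
    (hc : ∀ x y, |c x - c y| ≤ M * ‖x - y‖)
    (G : EuclideanSpace ℝ (Fin d) → ℝ) (hGm : Measurable G)
    (hGA : Integrable (fun z => ‖z‖ * |G z|))
    (h : EuclideanSpace ℝ (Fin d) → ℝ) (hh : MemLp h 2 volume) :
    MemLp (fun x => ∫ y, G (x - y) * (c x - c y) * h y) 2 volume ∧
    eLpNorm (fun x => ∫ y, G (x - y) * (c x - c y) * h y) 2 volume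
      ≤ ENNReal.ofReal (M * ∫ z, ‖z‖ * |G z|) * eLpNorm h 2 volume :=
  commutator_first_order_L2_general d c M hM hc G hGm hGA h hh
end

section
/- Let d ≥ 1. Let c : ℝ^d → ℝ be twice continuously differentiable with ‖D²c(x)‖ ≤ M (operator norm of the second derivative) for all x, let G : ℝ^d → ℝ be measurable with A := ∫_{ℝ^d} |z|²·|G(z)| dz < ∞, and let h ∈ L²(ℝ^d). Then the function F(x) := ∫_{ℝ^d} G(x−y)·(c(y) − c(x) − ∇c(x)·(y−x))·h(y) dy is well defined for almost every x, belongs to L²(ℝ^d), and satisfies ‖F‖_{L²} ≤ (M·A/2)·‖h‖_{L²}. -/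
/-!
By Taylor's formula, `|c y - c x - ∇c(x)·(y - x)| ≤ M/2 · |x - y|²`, so `|F|` is dominated
pointwise by the convolution `k ∗ |h|` with `k z = M/2 · |z|² |G z|`, whose integral is `M A / 2`.
Young's inequality `‖k ∗ H‖₂ ≤ ‖k‖₁ ‖H‖₂` then concludes; it follows from Cauchy–Schwarz against
the weight `k (x - ·)` and Tonelli, using that `∫ k (x - y) dy = ∫ k (x - y) dx = ‖k‖₁` by
translation invariance.
-/

open MeasureTheory Set
open scoped ENNReal

theorem norm_image_sub_sub_fderiv_le {E F : Type*} [NormedAddCommGroup E] [NormedSpace ℝ E]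
    [NormedAddCommGroup F] [NormedSpace ℝ F] {f : E → F} {M : ℝ}
    (hf : Differentiable ℝ f) (hf' : Differentiable ℝ (fderiv ℝ f))
    (hf'' : ∀ x, ‖fderiv ℝ (fderiv ℝ f) x‖ ≤ M) (x y : E) :
    ‖f y - f x - fderiv ℝ f x (y - x)‖ ≤ M / 2 * ‖y - x‖ ^ 2 := by
  set v := y - x
  have hlip : ∀ a b : E, ‖fderiv ℝ f a - fderiv ℝ f b‖ ≤ M * ‖a - b‖ := fun a b =>
    convex_univ.norm_image_sub_le_of_norm_fderiv_le (fun z _ => hf' z) (fun z _ => hf'' z)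
      (mem_univ b) (mem_univ a)
  have hderiv : ∀ t : ℝ, HasDerivAt (fun t : ℝ => f (x + t • v) - f x - t • fderiv ℝ f x v)
      (fderiv ℝ f (x + t • v) v - fderiv ℝ f x v) t := by
    intro t
    have hline : HasDerivAt (fun t : ℝ => x + t • v) v t := by
      simpa using ((hasDerivAt_id t).smul_const v).const_add x
    have := (((hf _).hasFDerivAt.comp_hasDerivAt t hline).sub_const (f x)).sub
      ((hasDerivAt_id' t).smul_const (fderiv ℝ f x v))
    rwa [one_smul] at this
  have hbound : ∀ t ∈ Ico (0 : ℝ) 1,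
      ‖fderiv ℝ f (x + t • v) v - fderiv ℝ f x v‖ ≤ M * ‖v‖ ^ 2 * t := by
    intro t ht
    calc ‖fderiv ℝ f (x + t • v) v - fderiv ℝ f x v‖
        ≤ ‖fderiv ℝ f (x + t • v) - fderiv ℝ f x‖ * ‖v‖ :=
          (fderiv ℝ f (x + t • v) - fderiv ℝ f x).le_opNorm v
      _ ≤ M * ‖t • v‖ * ‖v‖ := by
          gcongr
          simpa using hlip (x + t • v) x
      _ = M * ‖v‖ ^ 2 * t := by
          rw [norm_smul, Real.norm_of_nonneg ht.1]
          ring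
  have hB : ∀ t : ℝ, HasDerivAt (fun t => M / 2 * ‖v‖ ^ 2 * t ^ 2) (M * ‖v‖ ^ 2 * t) t := by
    intro t
    refine ((hasDerivAt_pow 2 t).const_mul (M / 2 * ‖v‖ ^ 2)).congr_deriv ?_
    push_cast
    ring
  simpa [v] using image_norm_le_of_norm_deriv_right_le_deriv_boundary
    (fun t _ => (hderiv t).continuousAt.continuousWithinAt)
    (fun t _ => (hderiv t).hasDerivWithinAt) (by simp) hB hbound (right_mem_Icc.2 zero_le_one)

theorem enorm_mul_sub_sub_fderiv_mul_le {E : Type*} [NormedAddCommGroup E] [NormedSpace ℝ E]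
    {f : E → ℝ} {M : ℝ} (hf : Differentiable ℝ f) (hf' : Differentiable ℝ (fderiv ℝ f))
    (hf'' : ∀ x, ‖fderiv ℝ (fderiv ℝ f) x‖ ≤ M) (g a : ℝ) (x y : E) :
    ‖g * (f y - f x - fderiv ℝ f x (y - x)) * a‖ₑ
      ≤ ENNReal.ofReal (M / 2 * (‖x - y‖ ^ 2 * |g|)) * ‖a‖ₑ := by
  rw [← ofReal_norm, ← ofReal_norm, ← ENNReal.ofReal_mul' (norm_nonneg a)]
  refine ENNReal.ofReal_le_ofReal ?_
  calc ‖g * (f y - f x - fderiv ℝ f x (y - x)) * a‖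
      ≤ ‖g‖ * (M / 2 * ‖y - x‖ ^ 2) * ‖a‖ := by
        rw [norm_mul, norm_mul]
        gcongr
        exact norm_image_sub_sub_fderiv_le hf hf' hf'' x y
    _ = M / 2 * (‖x - y‖ ^ 2 * |g|) * ‖a‖ := by
        rw [norm_sub_rev, Real.norm_eq_abs]; ring

theorem ENNReal.lintegral_mul_sq_le {α : Type*} [MeasurableSpace α] {μ : Measure α}
    {w g : α → ℝ≥0∞} (hw : AEMeasurable w μ) (hg : AEMeasurable g μ) :
    (∫⁻ a, w a * g a ∂μ) ^ 2 ≤ (∫⁻ a, w a ∂μ) * ∫⁻ a, w a * g a ^ 2 ∂μ := by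
  have hsplit : ∀ a, w a * g a = w a ^ (1 / 2 : ℝ) * (w a * g a ^ 2) ^ (1 / 2 : ℝ) := fun a => by
    rw [ENNReal.mul_rpow_of_nonneg _ _ (by norm_num), ← mul_assoc,
      ← ENNReal.rpow_add_of_nonneg _ _ (by norm_num) (by norm_num), ← ENNReal.rpow_natCast,
      ← ENNReal.rpow_mul]
    norm_num
  have hsq : ∀ a : ℝ≥0∞, (a ^ (1 / 2 : ℝ)) ^ 2 = a := fun a => by
    rw [← ENNReal.rpow_natCast, ← ENNReal.rpow_mul]; norm_num
  calc (∫⁻ a, w a * g a ∂μ) ^ 2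
      ≤ ((∫⁻ a, w a ∂μ) ^ (1 / 2 : ℝ) * (∫⁻ a, w a * g a ^ 2 ∂μ) ^ (1 / 2 : ℝ)) ^ 2 := by
        simp_rw [hsplit]
        gcongr
        exact ENNReal.lintegral_mul_norm_pow_le hw (hw.mul (hg.pow_const 2))
          (by norm_num) (by norm_num) (by norm_num)
    _ = (∫⁻ a, w a ∂μ) * ∫⁻ a, w a * g a ^ 2 ∂μ := by rw [mul_pow, hsq, hsq]

section Convolution

variable {G : Type*} [AddCommGroup G] [MeasurableSpace G] [MeasurableAdd₂ G] [MeasurableNeg G]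
  {μ : Measure G} [SFinite μ] [μ.IsAddLeftInvariant] [μ.IsNegInvariant]

theorem lintegral_lconvolution_sq_le_s16 {k H : G → ℝ≥0∞} (hk : Measurable k)
    (hH : AEMeasurable H μ) :
    ∫⁻ x, (H ⋆ₗ[μ] k) x ^ 2 ∂μ ≤ (∫⁻ z, k z ∂μ) ^ 2 * ∫⁻ y, H y ^ 2 ∂μ := by
  simp_rw [lconvolution_def, neg_add_eq_sub, mul_comm (H _)]
  have hk_left : ∀ x, ∫⁻ y, k (x - y) ∂μ = ∫⁻ z, k z ∂μ := lintegral_sub_left_eq_self k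
  have hk_right : ∀ y, ∫⁻ x, k (x - y) ∂μ = ∫⁻ z, k z ∂μ := lintegral_sub_right_eq_self k
  have hprod : AEMeasurable (Function.uncurry fun x y => k (x - y) * H y ^ 2) (μ.prod μ) :=
    (hk.comp measurable_sub).aemeasurable.mul (hH.comp_snd.pow_const 2)
  calc ∫⁻ x, (∫⁻ y, k (x - y) * H y ∂μ) ^ 2 ∂μ
      ≤ ∫⁻ x, (∫⁻ z, k z ∂μ) * ∫⁻ y, k (x - y) * H y ^ 2 ∂μ ∂μ := by
        refine lintegral_mono fun x => ?_
        rw [← hk_left x]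
        exact ENNReal.lintegral_mul_sq_le (hk.comp (measurable_const_sub x)).aemeasurable hH
    _ = (∫⁻ z, k z ∂μ) * ∫⁻ y, ∫⁻ x, k (x - y) * H y ^ 2 ∂μ ∂μ := by
        have hinner : AEMeasurable (fun x => ∫⁻ y, k (x - y) * H y ^ 2 ∂μ) μ :=
          hprod.lintegral_prod_right'
        rw [lintegral_const_mul'' _ hinner, lintegral_lintegral_swap hprod]
    _ = (∫⁻ z, k z ∂μ) * ∫⁻ y, (∫⁻ z, k z ∂μ) * H y ^ 2 ∂μ := by
        congr 1
        refine lintegral_congr fun y => ?_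
        rw [lintegral_mul_const (f := fun x => k (x - y)) _ (hk.comp (measurable_sub_const y)),
          hk_right]
    _ = (∫⁻ z, k z ∂μ) ^ 2 * ∫⁻ y, H y ^ 2 ∂μ := by
        rw [lintegral_const_mul'' _ (hH.pow_const 2)]
        ring

theorem eLpNorm_lconvolution_two_le {k H : G → ℝ≥0∞} (hk : Measurable k)
    (hH : AEMeasurable H μ) :
    eLpNorm (H ⋆ₗ[μ] k) 2 μ ≤ (∫⁻ z, k z ∂μ) * eLpNorm H 2 μ := by
  have hsq : ∀ F : G → ℝ≥0∞, eLpNorm F 2 μ ^ 2 = ∫⁻ x, F x ^ 2 ∂μ := fun F => by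
    simpa using eLpNorm_nnreal_pow_eq_lintegral (f := F) (μ := μ) (p := 2) two_ne_zero
  rw [← ENNReal.pow_le_pow_left_iff two_ne_zero, mul_pow, hsq, hsq]
  exact lintegral_lconvolution_sq_le_s16 hk hH

theorem eLpNorm_integral_two_le_of_enorm_le_convolution_kernel {E F : Type*} [NormedAddCommGroup E]
    [NormedSpace ℝ E] [NormedAddCommGroup F] {K : G → G → E} {k : G → ℝ≥0∞} {h : G → F}
    (hk : Measurable k) (hh : AEStronglyMeasurable h μ)
    (hK : ∀ x y, ‖K x y‖ₑ ≤ k (x - y) * ‖h y‖ₑ) :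
    eLpNorm (fun x => ∫ y, K x y ∂μ) 2 μ ≤ (∫⁻ z, k z ∂μ) * eLpNorm h 2 μ :=
  calc eLpNorm (fun x => ∫ y, K x y ∂μ) 2 μ
      ≤ eLpNorm ((‖h ·‖ₑ) ⋆ₗ[μ] k) 2 μ := by
        refine eLpNorm_mono_enorm fun x => (enorm_integral_le_lintegral_enorm _).trans ?_
        simp_rw [enorm_eq_self, lconvolution_def, neg_add_eq_sub, mul_comm ‖h _‖ₑ]
        exact lintegral_mono (hK x)
    _ ≤ (∫⁻ z, k z ∂μ) * eLpNorm (‖h ·‖ₑ) 2 μ := eLpNorm_lconvolution_two_le hk hh.enorm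
    _ = (∫⁻ z, k z ∂μ) * eLpNorm h 2 μ := by rw [eLpNorm_enorm]

end Convolution

theorem commutator_second_order_L2_general (d : ℕ)
    (c : EuclideanSpace ℝ (Fin d) → ℝ) (M : ℝ) (hM : 0 ≤ M)
    (hc : ContDiff ℝ 2 c)
    (hc2 : ∀ x, ‖fderiv ℝ (fderiv ℝ c) x‖ ≤ M)
    (G : EuclideanSpace ℝ (Fin d) → ℝ) (hGm : Measurable G)
    (hGA : Integrable (fun z => ‖z‖ ^ 2 * |G z|))
    (h : EuclideanSpace ℝ (Fin d) → ℝ) (hh : MemLp h 2 volume) :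
    MemLp (fun x => ∫ y, G (x - y) * (c y - c x - fderiv ℝ c x (y - x)) * h y) 2 volume ∧
    eLpNorm (fun x => ∫ y, G (x - y) * (c y - c x - fderiv ℝ c x (y - x)) * h y) 2 volume
      ≤ ENNReal.ofReal (M * (∫ z, ‖z‖ ^ 2 * |G z|) / 2) * eLpNorm h 2 volume := by
  have hc1 : Differentiable ℝ c := hc.differentiable (by simp)
  have hc1' : Differentiable ℝ (fderiv ℝ c) :=
    (hc.fderiv_right (m := 1) (by norm_num)).differentiable one_ne_zero
  have hk_int : ∫⁻ z, ENNReal.ofReal (M / 2 * (‖z‖ ^ 2 * |G z|))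
      = ENNReal.ofReal (M * (∫ z, ‖z‖ ^ 2 * |G z|) / 2) := by
    rw [← ofReal_integral_eq_lintegral_ofReal (hGA.const_mul (M / 2))
      (ae_of_all _ fun z => by positivity), integral_const_mul]
    ring_nf
  have hbound : eLpNorm (fun x => ∫ y, G (x - y) * (c y - c x - fderiv ℝ c x (y - x)) * h y) 2
      volume ≤ ENNReal.ofReal (M * (∫ z, ‖z‖ ^ 2 * |G z|) / 2) * eLpNorm h 2 volume := by
    rw [← hk_int]
    exact eLpNorm_integral_two_le_of_enorm_le_convolution_kernel (by fun_prop) hh.1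
      fun x y => enorm_mul_sub_sub_fderiv_mul_le hc1 hc1' hc2 (G (x - y)) (h y) x y
  refine ⟨⟨?_, hbound.trans_lt (ENNReal.mul_lt_top ENNReal.ofReal_lt_top hh.2)⟩, hbound⟩
  have hremainder : Continuous fun p : EuclideanSpace ℝ (Fin d) × EuclideanSpace ℝ (Fin d) =>
      c p.2 - c p.1 - fderiv ℝ c p.1 (p.2 - p.1) := by
    have := hc.continuous_fderiv (by simp)
    fun_prop
  exact AEStronglyMeasurable.integral_prod_right'
    (f := fun p => G (p.1 - p.2) * (c p.2 - c p.1 - fderiv ℝ c p.1 (p.2 - p.1)) * h p.2)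
    (((hGm.comp measurable_sub).aestronglyMeasurable.mul hremainder.aestronglyMeasurable).mul
      hh.1.comp_snd)

/-- Second-order (Taylor remainder) commutator estimate: if `c` is `C²` with
`‖D²c‖ ≤ M`, `A = ∫ |z|²·|G(z)| dz < ∞` and `h ∈ L²`, then
`F(x) = ∫ G(x−y)(c(y)−c(x)−∇c(x)·(y−x))h(y) dy` belongs to `L²` with
`‖F‖_{L²} ≤ (M·A/2)·‖h‖_{L²}`. -/
theorem commutator_second_order_L2 (d : ℕ) (hd : 1 ≤ d)
    (c : EuclideanSpace ℝ (Fin d) → ℝ) (M : ℝ) (hM : 0 ≤ M)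
    (hc : ContDiff ℝ 2 c)
    (hc2 : ∀ x, ‖fderiv ℝ (fderiv ℝ c) x‖ ≤ M)
    (G : EuclideanSpace ℝ (Fin d) → ℝ) (hGm : Measurable G)
    (hGA : Integrable (fun z => ‖z‖ ^ 2 * |G z|))
    (h : EuclideanSpace ℝ (Fin d) → ℝ) (hh : MemLp h 2 volume) :
    MemLp (fun x => ∫ y, G (x - y) * (c y - c x - fderiv ℝ c x (y - x)) * h y) 2 volume ∧
    eLpNorm (fun x => ∫ y, G (x - y) * (c y - c x - fderiv ℝ c x (y - x)) * h y) 2 volume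
      ≤ ENNReal.ofReal (M * (∫ z, ‖z‖ ^ 2 * |G z|) / 2) * eLpNorm h 2 volume :=
  commutator_second_order_L2_general d c M hM hc hc2 G hGm hGA h hh
end

section
/- Let C ≥ 1 be a real number, let X : [0,∞) → [0,∞) be continuous and let H : [0,∞) → [0,∞) be locally integrable. Assume that for every t ≥ 0, X(t) + ∫_0^t H(τ) dτ ≤ C·(X(0) + ∫_0^t H(τ)·X(τ) dτ), and that 4·C²·X(0) ≤ 1. Then for every t ≥ 0, X(t) + (1/2)·∫_0^t H(τ) dτ ≤ C·X(0). -/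
open MeasureTheory

/-- Abstract bootstrap lemma closing the a priori estimates globally in time:
if `X(t) + ∫₀ᵗ H ≤ C(X(0) + ∫₀ᵗ H·X)` for all `t ≥ 0` and `4C²X(0) ≤ 1`, then
`X(t) + ½∫₀ᵗ H ≤ C·X(0)` for all `t ≥ 0`. -/
theorem bootstrap_global_bound (C : ℝ) (hC : 1 ≤ C) (X H : ℝ → ℝ)
    (hXcont : ContinuousOn X (Set.Ici 0))
    (hXnonneg : ∀ t, 0 ≤ t → 0 ≤ X t)
    (hHnonneg : ∀ t, 0 ≤ t → 0 ≤ H t)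
    (hHint : ∀ t, 0 ≤ t → IntervalIntegrable H volume 0 t)
    (hineq : ∀ t, 0 ≤ t → X t + ∫ τ in (0 : ℝ)..t, H τ
        ≤ C * (X 0 + ∫ τ in (0 : ℝ)..t, H τ * X τ))
    (hsmall : 4 * C ^ 2 * X 0 ≤ 1) :
    ∀ t, 0 ≤ t → X t + (1 / 2) * ∫ τ in (0 : ℝ)..t, H τ ≤ C * X 0 := by
  have hC0 : (0:ℝ) < C := lt_of_lt_of_le one_pos hC
  have hX00 : 0 ≤ X 0 := hXnonneg 0 le_rfl
  have hCX0 : C * X 0 ≤ 1 / (4 * C) := by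
    rw [le_div_iff₀ (by positivity)]
    nlinarith
  have hhalf : 1 / (4 * C) < 1 / (2 * C) := by
    apply div_lt_div_of_pos_left one_pos (by positivity)
    nlinarith
  -- Key self-improving estimate
  have key : ∀ t, 0 ≤ t → (∀ s, 0 ≤ s → s ≤ t → X s ≤ 1 / (2 * C)) →
      X t + (1 / 2) * ∫ τ in (0:ℝ)..t, H τ ≤ C * X 0 := by
    intro t ht hbd
    have hHi := hHint t ht
    have hXi : IntervalIntegrable (fun τ => H τ * X τ) volume 0 t := by
      apply hHi.mul_continuousOn
      apply hXcont.mono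
      rw [Set.uIcc_of_le ht]
      exact fun x hx => hx.1
    have hmono : (∫ τ in (0:ℝ)..t, H τ * X τ)
        ≤ ∫ τ in (0:ℝ)..t, H τ * (1 / (2 * C)) := by
      apply intervalIntegral.integral_mono_on ht hXi (hHi.mul_const _)
      intro s hs
      exact mul_le_mul_of_nonneg_left (hbd s hs.1 hs.2) (hHnonneg s hs.1)
    have hHval : (∫ τ in (0:ℝ)..t, H τ * (1 / (2 * C)))
        = (1 / (2 * C)) * ∫ τ in (0:ℝ)..t, H τ := by
      rw [intervalIntegral.integral_mul_const, mul_comm]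
    rw [hHval] at hmono
    have h1 := hineq t ht
    have h2 : C * (∫ τ in (0:ℝ)..t, H τ * X τ)
        ≤ C * ((1 / (2 * C)) * ∫ τ in (0:ℝ)..t, H τ) :=
      mul_le_mul_of_nonneg_left hmono hC0.le
    have h3 : C * ((1 / (2 * C)) * ∫ τ in (0:ℝ)..t, H τ)
        = (1 / 2) * ∫ τ in (0:ℝ)..t, H τ := by
      field_simp
    rw [h3] at h2
    nlinarith [h1, h2]
  have hInt_nonneg : ∀ t, 0 ≤ t → 0 ≤ ∫ τ in (0:ℝ)..t, H τ := by
    intro t ht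
    exact intervalIntegral.integral_nonneg ht (fun s hs => hHnonneg s hs.1)
  have keyX : ∀ t, 0 ≤ t → (∀ s, 0 ≤ s → s ≤ t → X s ≤ 1 / (2 * C)) →
      X t ≤ 1 / (4 * C) := by
    intro t ht hbd
    have h1 := key t ht hbd
    have h2 := hInt_nonneg t ht
    nlinarith
  have hX0small : X 0 ≤ 1 / (2 * C) := by
    have : C * X 0 ≤ 1 / (4 * C) := hCX0
    nlinarith
  -- Main continuity argument
  have main : ∀ t₀, 0 ≤ t₀ → ∀ s, 0 ≤ s → s ≤ t₀ → X s ≤ 1 / (2 * C) := by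
    intro t₀ ht₀
    set S : Set ℝ := {t | t ∈ Set.Icc 0 t₀ ∧ ∀ s, 0 ≤ s → s ≤ t → X s ≤ 1 / (2 * C)}
      with hS
    have h0S : (0:ℝ) ∈ S := by
      refine ⟨⟨le_rfl, ht₀⟩, fun s hs hs' => ?_⟩
      have : s = 0 := le_antisymm hs' hs
      rw [this]; exact hX0small
    have hbdd : BddAbove S := ⟨t₀, fun x hx => hx.1.2⟩
    set u := sSup S with hu
    have hu0 : 0 ≤ u := le_csSup hbdd h0S
    have hut : u ≤ t₀ := csSup_le ⟨0, h0S⟩ (fun x hx => hx.1.2)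
    have hlt : ∀ s, 0 ≤ s → s < u → X s ≤ 1 / (2 * C) := by
      intro s hs hsu
      obtain ⟨x, hxS, hsx⟩ := exists_lt_of_lt_csSup ⟨0, h0S⟩ hsu
      exact hxS.2 s hs hsx.le
    have huS : u ∈ S := by
      refine ⟨⟨hu0, hut⟩, ?_⟩
      intro s hs hsu
      rcases lt_or_eq_of_le hsu with h | h
      · exact hlt s hs h
      · subst h
        rcases eq_or_lt_of_le hu0 with h0 | h0
        · rw [← h0] at *; exact hX0small
        · have hcw : Filter.Tendsto X (nhdsWithin u (Set.Ico 0 u)) (nhds (X u)) :=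
            (hXcont u hu0).mono (fun x hx => hx.1)
          have hne : (nhdsWithin u (Set.Ico 0 u)).NeBot := by
            rw [← mem_closure_iff_nhdsWithin_neBot, closure_Ico (ne_of_lt h0)]
            exact ⟨hu0, le_rfl⟩
          refine le_of_tendsto hcw ?_
          filter_upwards [self_mem_nhdsWithin] with x hx
          exact hlt x hx.1 hx.2
    rcases lt_or_eq_of_le hut with hlt' | heq
    · exfalso
      have hXu : X u ≤ 1 / (4 * C) := keyX u hu0 huS.2
      have hcw : ContinuousWithinAt X (Set.Ici 0) u := hXcont u hu0
      have hev : ∀ᶠ s in nhdsWithin u (Set.Ici 0), X s < 1 / (2 * C) := by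
        apply hcw.eventually_lt continuousWithinAt_const
        exact lt_of_le_of_lt hXu hhalf
      obtain ⟨ε, hε, hball⟩ := Metric.mem_nhdsWithin_iff.mp hev
      set t' := min (u + ε / 2) t₀ with ht'
      have ht'u : u < t' := lt_min (by linarith) hlt'
      have ht'S : t' ∈ S := by
        refine ⟨⟨le_trans hu0 ht'u.le, min_le_right _ _⟩, ?_⟩
        intro s hs hst'
        rcases le_or_gt s u with hsu | hsu
        · exact huS.2 s hs hsu
        · have h1 : s ≤ u + ε / 2 := le_trans hst' (min_le_left _ _)
          have h2 : dist s u < ε := by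
            rw [Real.dist_eq, abs_of_nonneg (by linarith)]
            linarith
          exact (hball ⟨Metric.mem_ball.mpr h2, hs⟩).le
      have := le_csSup hbdd ht'S
      linarith
    · rw [heq] at huS
      exact huS.2
  intro t ht
  exact key t ht (main t ht)
end
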